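/- If A₊ satisfies [Δ, K A₊ K†] = i p K A₊ K† with p ≠ 0 real, Δ ∈ u(n), K ∈ U(n), then the Hermitian matrix H := A₊ + A₊† is sign-reversible by a unitary: there exists U ∈ U(n) of the form K† e^{-φΔ} K with U H U† = −H. -/

import Mathlib

/-!
Conjugating by `K` turns `U = Kᴴ e^{-φΔ} K` into `e^{X}` with `X = -φ Kᴴ Δ K` skew-adjoint, hence
`U` unitary, and makes `A₊` an eigenvector of `ad X` with eigenvalue `-iφp = -iπ`. Conjugation by
`e^{X}` multiplies an eigenvector of `ad X` with eigenvalue `c` by `e^{c}`; since `X` is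
skew-adjoint, `A₊ᴴ` is an eigenvector with eigenvalue `iπ`, and both factors are `-1`.
-/

open Matrix NormedSpace

section Ring

variable {R : Type*} [Ring R]

theorem star_star_mul_mul_eq_neg [StarRing R] {u Δ : R} (hΔ : star Δ = -Δ) :
    star (star u * Δ * u) = -(star u * Δ * u) := by
  rw [star_mul, star_mul, star_star, hΔ, ← mul_assoc, mul_neg, neg_mul]

theorem mul_mul_star_eq_neg_of_anticommute [StarRing R] {E M : R} (hE : E ∈ unitary R)
    (h : E * M = -(M * E)) : E * M * star E = -M := by
  rw [h, neg_mul, mul_assoc, Unitary.mul_star_self_of_mem hE, mul_one]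

variable [Algebra ℂ R]

theorem commutator_smul_left_eq_smul {Δ B : R} {c : ℂ} (t : ℂ) (h : Δ * B - B * Δ = c • B) :
    (t • Δ) * B - B * (t • Δ) = (t * c) • B := by
  rw [smul_mul_assoc, mul_smul_comm, ← smul_sub, h, smul_smul]

theorem commutator_star_mul_mul_eq_smul [StarRing R] {u Δ A : R} {c : ℂ} (hu : u ∈ unitary R)
    (h : Δ * (u * A * star u) - (u * A * star u) * Δ = c • (u * A * star u)) :
    (star u * Δ * u) * A - A * (star u * Δ * u) = c • A := by
  have cancel (x : R) : star u * (u * x) = x := by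
    rw [← mul_assoc, Unitary.star_mul_self_of_mem hu, one_mul]
  have := congrArg (fun M => star u * M * u) h
  simpa only [mul_sub, sub_mul, mul_smul_comm, smul_mul_assoc, mul_assoc, cancel,
    Unitary.star_mul_self_of_mem hu, mul_one] using this

variable [StarRing R] [StarModule ℂ R]

theorem commutator_star_eq_star_smul {Δ B : R} {c : ℂ} (hΔ : star Δ = -Δ)
    (h : Δ * B - B * Δ = c • B) : Δ * star B - star B * Δ = star c • star B := by
  have := congrArg star h
  rw [star_sub, star_mul, star_mul, hΔ, star_smul] at this
  rw [← this, mul_neg, neg_mul, sub_neg_eq_add, neg_add_eq_sub]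

theorem star_ofReal_smul_eq_neg {Δ : R} (hΔ : star Δ = -Δ) (t : ℝ) :
    star ((t : ℂ) • Δ) = -((t : ℂ) • Δ) := by
  rw [star_smul, hΔ, Complex.star_def, Complex.conj_ofReal, smul_neg]

end Ring

section BanachAlgebra

variable {𝔸 : Type*} [NormedRing 𝔸] [NormedAlgebra ℂ 𝔸] [CompleteSpace 𝔸]

theorem exp_mul_eq_smul_mul_exp_of_commutator_eq_smul {X B : 𝔸} {c : ℂ}
    (h : X * B - B * X = c • B) : exp X * B = Complex.exp c • (B * exp X) := by
  let := NormedAlgebra.restrictScalars ℚ ℂ 𝔸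
  have hsemi : SemiconjBy B (algebraMap ℂ 𝔸 c + X) X := by
    rw [SemiconjBy, mul_add, ← Algebra.commutes, ← Algebra.smul_def, ← h, sub_add_cancel]
  rw [← hsemi.exp_right, exp_add_of_commute (Algebra.commutes c X), ← algebraMap_exp_comm,
    ← Complex.exp_eq_exp_ℂ, ← mul_assoc, ← Algebra.commutes, mul_assoc, ← Algebra.smul_def]

theorem star_mul_exp_mul_of_mem_unitary [StarRing 𝔸] {u : 𝔸} (hu : u ∈ unitary 𝔸) (X : 𝔸) :
    star u * exp X * u = exp (star u * X * u) := by
  let := NormedAlgebra.restrictScalars ℚ ℂ 𝔸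
  have hsemi : SemiconjBy u (star u * X * u) X := by
    rw [SemiconjBy, ← mul_assoc, ← mul_assoc, Unitary.mul_star_self_of_mem hu, one_mul]
  rw [mul_assoc, ← hsemi.exp_right, ← mul_assoc, Unitary.star_mul_self_of_mem hu, one_mul]

variable [StarRing 𝔸] [ContinuousStar 𝔸]

theorem exp_mem_unitary_of_star_eq_neg {X : 𝔸} (hX : star X = -X) : exp X ∈ unitary 𝔸 :=
  let := NormedAlgebra.restrictScalars ℚ ℂ 𝔸
  exp_mem_unitary_of_mem_skewAdjoint hX

variable [StarModule ℂ 𝔸]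

theorem exp_mul_add_star_mul_star_exp_eq_neg {X A : 𝔸} {c : ℂ} (hX : star X = -X)
    (h : X * A - A * X = c • A) (hc : Complex.exp c = -1) :
    exp X * (A + star A) * star (exp X) = -(A + star A) := by
  have hc' : Complex.exp (star c) = -1 := by
    rw [Complex.star_def, Complex.exp_conj, hc, map_neg, map_one]
  have anticomm {B : 𝔸} {b : ℂ} (hB : X * B - B * X = b • B) (hb : Complex.exp b = -1) :
      exp X * B = -(B * exp X) := by
    rw [exp_mul_eq_smul_mul_exp_of_commutator_eq_smul hB, hb, neg_one_smul]
  refine mul_mul_star_eq_neg_of_anticommute (exp_mem_unitary_of_star_eq_neg hX) ?_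
  rw [mul_add, add_mul, anticomm h hc, anticomm (commutator_star_eq_star_smul hX h) hc', neg_add]

end BanachAlgebra

/-- If `[Δ, K A₊ Kᴴ] = i p • K A₊ Kᴴ` with `p ≠ 0` real, `Δ` skew-Hermitian and
`K` unitary, then `H := A₊ + A₊ᴴ` is sign-reversed by a unitary of the form
`Kᴴ e^{-φΔ} K`. -/
theorem stmt14 (n : ℕ) (Aplus Δ K : Matrix (Fin n) (Fin n) ℂ)
    (hΔ : Δᴴ = -Δ) (hK : K ∈ Matrix.unitaryGroup (Fin n) ℂ)
    (p : ℝ) (hp : p ≠ 0)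
    (heig : Δ * (K * Aplus * Kᴴ) - (K * Aplus * Kᴴ) * Δ =
      (Complex.I * (p : ℂ)) • (K * Aplus * Kᴴ)) :
    ∃ φ : ℝ, ∃ U : Matrix (Fin n) (Fin n) ℂ,
      U = Kᴴ * NormedSpace.exp ((-(φ : ℂ)) • Δ) * K ∧
      U ∈ Matrix.unitaryGroup (Fin n) ℂ ∧
      U * (Aplus + Aplusᴴ) * Uᴴ = -(Aplus + Aplusᴴ) := by
  -- the L2 operator norm induces the entrywise topology used by `exp` in the statement
  open scoped Matrix.Norms.L2Operator in (
    set φ : ℝ := Real.pi / p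
    set X := star K * (((-φ : ℝ) : ℂ) • Δ) * K
    have hX : star X = -X := star_star_mul_mul_eq_neg (star_ofReal_smul_eq_neg hΔ _)
    have hU : Kᴴ * exp ((-(φ : ℂ)) • Δ) * K = exp X := by
      rw [← star_eq_conjTranspose, star_mul_exp_mul_of_mem_unitary hK, ← Complex.ofReal_neg]
    have hcomm : X * Aplus - Aplus * X = ((-φ : ℝ) * (Complex.I * p)) • Aplus :=
      commutator_star_mul_mul_eq_smul hK (commutator_smul_left_eq_smul _ heig)
    have hc : Complex.exp ((-φ : ℝ) * (Complex.I * p)) = -1 := by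
      have : ((-φ : ℝ) : ℂ) * (Complex.I * p) = -(Real.pi * Complex.I) := by
        push_cast [φ]; field_simp [Complex.ofReal_ne_zero.mpr hp]
      rw [this, Complex.exp_neg, Complex.exp_pi_mul_I, inv_neg, inv_one]
    refine ⟨φ, _, rfl, hU ▸ exp_mem_unitary_of_star_eq_neg hX, ?_⟩
    rw [hU]
    exact exp_mul_add_star_mul_star_exp_eq_neg hX hcomm hc)
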